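/- Let G be a connected weighted graph on a finite vertex set V with |V| = n and Laplacian L, and let Z be a Moore–Penrose pseudoinverse of L. Then the sum over edges e = {u,v} of G of the leverage scores, Σ_{edges {u,v}} w(u,v) · (χ_u − χ_v)ᵀ Z (χ_u − χ_v), equals n − 1. -/

import Mathlib

open Matrix

variable {V : Type*}

/-- The Laplacian of a weighted graph. -/
noncomputable def lap [Fintype V] [DecidableEq V] (w : V → V → ℝ) : Matrix V V ℝ :=
  Matrix.of fun u v => if u = v then ∑ z, w u z else - w u v

/-!
Writing `b_uv = χ_u - χ_v`, the Laplacian is `L = ∑_{edges} w(u,v) b_uv b_uvᵀ`, so the sum of the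
leverage scores is `tr (L Z)`. From `L Z L = L`, the matrix `L Z` is idempotent of the same rank as
`L`, hence its trace is `rank L`. Finally `xᵀ L x = ∑_{edges} w(u,v) (x_u - x_v)²`, so on a
connected graph the kernel of `L` consists of the constant vectors and `rank L = n - 1`.
-/

theorem Matrix.trace_eq_rank_of_isIdempotentElem {n K : Type*} [Fintype n] [DecidableEq n]
    [Field K] {P : Matrix n n K} (hP : IsIdempotentElem P) : P.trace = P.rank := by
  have hproj := LinearMap.IsIdempotentElem.isProj_range _ (hP.map toLinAlgEquiv')
  rw [← trace_toLin'_eq]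
  exact hproj.trace

theorem Matrix.trace_mul_eq_rank_of_mul_mul_eq_self {m n K : Type*} [Fintype m] [Fintype n]
    [DecidableEq m] [Field K] {A : Matrix m n K} {Z : Matrix n m K} (h : A * Z * A = A) :
    (A * Z).trace = A.rank := by
  have hidem : IsIdempotentElem (A * Z) := by
    rw [IsIdempotentElem, ← Matrix.mul_assoc, h]
  rw [trace_eq_rank_of_isIdempotentElem hidem]
  congr 1
  refine le_antisymm (rank_mul_le_left A Z) ?_
  conv_lhs => rw [← h]
  exact rank_mul_le_left _ _

theorem SimpleGraph.Reachable.apply_eq_of_forall_adj {α : Type*} {G : SimpleGraph V}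
    {f : V → α} (hf : ∀ u v, G.Adj u v → f u = f v) {u v : V} (h : G.Reachable u v) :
    f u = f v := by
  obtain ⟨p⟩ := h
  induction p with
  | nil => rfl
  | cons hadj _ ih => exact (hf _ _ hadj).trans ih

section Laplacian

variable [Fintype V] {w : V → V → ℝ}

theorem sum_sum_mul_swap (hw_symm : ∀ u v, w u v = w v u) (f : V → V → ℝ) :
    ∑ u, ∑ v, w u v * f v u = ∑ u, ∑ v, w u v * f u v := by
  rw [Finset.sum_comm]
  simp_rw [hw_symm]

variable [DecidableEq V]

theorem lap_eq_diagonal_sub (hw_diag : ∀ u, w u u = 0) :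
    lap w = diagonal (fun u => ∑ z, w u z) - of w := by
  ext u v
  by_cases h : u = v
  · subst h
    simp [lap, hw_diag]
  · simp [lap, h]

theorem lap_mulVec_one (hw_diag : ∀ u, w u u = 0) : lap w *ᵥ 1 = 0 := by
  rw [lap_eq_diagonal_sub hw_diag, sub_mulVec]
  ext u
  simp [mulVec, dotProduct, diagonal_apply]

theorem trace_lap_mul (hw_symm : ∀ u v, w u v = w v u) (hw_diag : ∀ u, w u u = 0)
    (M : Matrix V V ℝ) :
    (lap w * M).trace = (1 / 2) * ∑ u, ∑ v, w u v *
      ((Pi.single u 1 - Pi.single v 1) ⬝ᵥ M *ᵥ (Pi.single u 1 - Pi.single v 1)) := by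
  have hquad : ∀ u v, (Pi.single u 1 - Pi.single v 1 : V → ℝ) ⬝ᵥ
      M *ᵥ (Pi.single u 1 - Pi.single v 1) = M u u + M v v - M u v - M v u := by
    intro u v
    simp only [mulVec_sub, mulVec_single_one, sub_dotProduct, dotProduct_sub,
      single_dotProduct, one_mul, col_apply]
    ring
  have htrace : (lap w * M).trace = ∑ u, ∑ v, w u v * M u u - ∑ u, ∑ v, w u v * M v u := by
    rw [lap_eq_diagonal_sub hw_diag, sub_mul, trace_sub]
    congr 1
    simp [trace, diagonal_mul, Finset.sum_mul]
  simp only [hquad, mul_sub, mul_add, Finset.sum_sub_distrib, Finset.sum_add_distrib]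
  rw [htrace, sum_sum_mul_swap hw_symm (fun u _ => M u u),
    sum_sum_mul_swap hw_symm (fun u v => M u v)]
  ring

theorem dotProduct_lap_mulVec (hw_symm : ∀ u v, w u v = w v u) (hw_diag : ∀ u, w u u = 0)
    (x : V → ℝ) :
    x ⬝ᵥ lap w *ᵥ x = (1 / 2) * ∑ u, ∑ v, w u v * (x u - x v) ^ 2 := by
  have h := trace_lap_mul hw_symm hw_diag (vecMulVec x x)
  rw [mul_vecMulVec, trace_vecMulVec, dotProduct_comm] at h
  rw [h]
  congr! 4 with u - v -
  simp [vecMulVec_mulVec, sq]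

theorem eq_of_lap_mulVec_eq_zero (hw_symm : ∀ u v, w u v = w v u)
    (hw_nonneg : ∀ u v, 0 ≤ w u v) (hw_diag : ∀ u, w u u = 0)
    (hconn : (SimpleGraph.fromRel fun u v => 0 < w u v).Connected)
    {x : V → ℝ} (hx : lap w *ᵥ x = 0) (u v : V) : x u = x v := by
  have hnonneg : ∀ u v, 0 ≤ w u v * (x u - x v) ^ 2 :=
    fun u v => mul_nonneg (hw_nonneg u v) (sq_nonneg _)
  have hsum : ∑ u, ∑ v, w u v * (x u - x v) ^ 2 = 0 := by
    have h := dotProduct_lap_mulVec hw_symm hw_diag x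
    rw [hx, dotProduct_zero] at h
    linarith
  rw [Finset.sum_eq_zero_iff_of_nonneg fun u _ => Finset.sum_nonneg fun v _ => hnonneg u v]
    at hsum
  have hterm : ∀ u v, w u v * (x u - x v) ^ 2 = 0 := fun u v =>
    (Finset.sum_eq_zero_iff_of_nonneg fun v _ => hnonneg u v).mp
      (hsum u (Finset.mem_univ u)) v (Finset.mem_univ v)
  refine (hconn.preconnected u v).apply_eq_of_forall_adj fun u v hadj => ?_
  have hpos : 0 < w u v := by
    obtain ⟨-, h | h⟩ := SimpleGraph.fromRel_adj _ u v |>.mp hadj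
    exacts [h, hw_symm u v ▸ h]
  have hsq : (x u - x v) ^ 2 = 0 := (mul_eq_zero.mp (hterm u v)).resolve_left hpos.ne'
  exact sub_eq_zero.mp (pow_eq_zero_iff two_ne_zero |>.mp hsq)

theorem ker_mulVecLin_lap (hw_symm : ∀ u v, w u v = w v u)
    (hw_nonneg : ∀ u v, 0 ≤ w u v) (hw_diag : ∀ u, w u u = 0)
    (hconn : (SimpleGraph.fromRel fun u v => 0 < w u v).Connected) :
    LinearMap.ker (lap w).mulVecLin = Submodule.span ℝ {1} := by
  refine le_antisymm (fun x hx => ?_)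
    ((Submodule.span_singleton_le_iff_mem _ _).mpr (lap_mulVec_one hw_diag))
  obtain ⟨v₀⟩ := hconn.nonempty
  refine Submodule.mem_span_singleton.mpr ⟨x v₀, funext fun u => ?_⟩
  simp [eq_of_lap_mulVec_eq_zero hw_symm hw_nonneg hw_diag hconn hx u v₀]

theorem rank_lap (hw_symm : ∀ u v, w u v = w v u)
    (hw_nonneg : ∀ u v, 0 ≤ w u v) (hw_diag : ∀ u, w u u = 0)
    (hconn : (SimpleGraph.fromRel fun u v => 0 < w u v).Connected) :
    (lap w).rank = Fintype.card V - 1 := by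
  have := hconn.nonempty
  have h := LinearMap.finrank_range_add_finrank_ker (lap w).mulVecLin
  rw [ker_mulVecLin_lap hw_symm hw_nonneg hw_diag hconn, finrank_span_singleton one_ne_zero,
    Module.finrank_fintype_fun_eq_card] at h
  exact Nat.eq_sub_of_add_eq h

end Laplacian

theorem sum_leverage_scores_eq_general [Fintype V] [DecidableEq V]
    (w : V → V → ℝ) (hw_symm : ∀ u v, w u v = w v u) (hw_nonneg : ∀ u v, 0 ≤ w u v)
    (hw_diag : ∀ u, w u u = 0)
    (hconn : (SimpleGraph.fromRel fun u v => 0 < w u v).Connected)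
    (Z : Matrix V V ℝ)
    (hZ1 : lap w * Z * lap w = lap w) :
    (1 / 2) * ∑ u, ∑ v, w u v *
        ((Pi.single u 1 - Pi.single v 1) ⬝ᵥ Z.mulVec (Pi.single u 1 - Pi.single v 1)) =
      (Fintype.card V : ℝ) - 1 := by
  have := hconn.nonempty
  rw [← trace_lap_mul hw_symm hw_diag Z, trace_mul_eq_rank_of_mul_mul_eq_self hZ1,
    rank_lap hw_symm hw_nonneg hw_diag hconn, Nat.cast_sub Fintype.card_pos, Nat.cast_one]

/-- Sum over the edges `{u,v}` (each counted once, since `w` is symmetric and each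
ordered pair is counted twice) of the leverage scores is `n - 1`. -/
theorem sum_leverage_scores_eq [Fintype V] [DecidableEq V]
    (w : V → V → ℝ) (hw_symm : ∀ u v, w u v = w v u) (hw_nonneg : ∀ u v, 0 ≤ w u v)
    (hw_diag : ∀ u, w u u = 0)
    (hconn : (SimpleGraph.fromRel fun u v => 0 < w u v).Connected)
    (Z : Matrix V V ℝ)
    (hZ1 : lap w * Z * lap w = lap w) (hZ2 : Z * lap w * Z = Z)
    (hZ3 : (lap w * Z)ᵀ = lap w * Z) (hZ4 : (Z * lap w)ᵀ = Z * lap w) :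
    (1 / 2) * ∑ u, ∑ v, w u v *
        ((Pi.single u 1 - Pi.single v 1) ⬝ᵥ Z.mulVec (Pi.single u 1 - Pi.single v 1)) =
      (Fintype.card V : ℝ) - 1 :=
  sum_leverage_scores_eq_general w hw_symm hw_nonneg hw_diag hconn Z hZ1
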